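/- arXiv:2109.03678 — 2 statements merged into one kernel-verified Lean document; each statement's English description precedes it below -/
import Mathlib

section
/- Let n ≥ 2, s ∈ ℝ_{>0}^n, and h ∈ ℝ_{≥0}^n with ⟨h, c(s)⟩ ≥ 1 + 1/n, i.e., Σ_{i=1}^n h_i/(n s_i) ≥ 1 + 1/n. Then Π_{i=1}^n ( (1 − 1/n²) s_i + (1/n²) h_i )^{−1} ≤ exp( −1/(2(n+1)²) ) · Π_{i=1}^n s_i^{−1}. Equivalently, the volume of the corner simplex bounded by the constraint (1−1/n²)s + (1/n²)h and the positive orthant is at most exp(−1/(2(n+1)²)) times the volume of the corner simplex bounded by s. -/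
/-!
Write `(1 - 1/n²) sᵢ + (1/n²) hᵢ = (1 - 1/n²) sᵢ (1 + xᵢ)` with `xᵢ = hᵢ / ((n² - 1) sᵢ)`. The
covering condition says `∑ xᵢ ≥ 1/(n - 1)`, so the Weierstrass product inequality
`∏ (1 + xᵢ) ≥ 1 + ∑ xᵢ` bounds the volume ratio by `((1 - 1/n²)^(n-1) (1 + 1/n))⁻¹`. With
`z = 1/(n+1)`, the elementary bounds `1 - 1/n² ≥ exp(-1/(n² - 1))` and
`1 + 1/n = (1 - z)⁻¹ ≥ exp(z + z²/2)` give `(1 - 1/n²)^(n-1) (1 + 1/n) ≥ exp(-z) exp(z + z²/2)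
= exp(z²/2)`.
-/

open Finset

theorem Finset.one_add_sum_le_prod_one_add {ι R : Type*} [CommSemiring R] [PartialOrder R]
    [IsOrderedRing R] (s : Finset ι) {f : ι → R} (hf : ∀ i ∈ s, 0 ≤ f i) :
    1 + ∑ i ∈ s, f i ≤ ∏ i ∈ s, (1 + f i) := by
  classical
  induction s using Finset.induction_on with
  | empty => simp
  | insert j s hj ih =>
    rw [sum_insert hj, prod_insert hj]
    have hfj : 0 ≤ f j := hf j (mem_insert_self j s)
    have hsum : 0 ≤ ∑ i ∈ s, f i := sum_nonneg fun i hi => hf i (mem_insert_of_mem hi)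
    calc 1 + (f j + ∑ i ∈ s, f i) ≤ 1 + (f j + ∑ i ∈ s, f i) + f j * ∑ i ∈ s, f i :=
          le_add_of_nonneg_right (mul_nonneg hfj hsum)
      _ = (1 + f j) * (1 + ∑ i ∈ s, f i) := by ring
      _ ≤ (1 + f j) * ∏ i ∈ s, (1 + f i) :=
          mul_le_mul_of_nonneg_left (ih fun i hi => hf i (mem_insert_of_mem hi))
            (add_nonneg zero_le_one hfj)

namespace Real

theorem exp_neg_div_one_sub_le_one_sub {y : ℝ} (hy : y < 1) :
    exp (-(y / (1 - y))) ≤ 1 - y := by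
  have hpos : 0 < 1 - y := sub_pos.2 hy
  have hlog := one_sub_inv_le_log_of_pos hpos
  rw [le_log_iff_exp_le hpos] at hlog
  convert hlog using 2
  field_simp
  ring

theorem exp_add_sq_div_two_le_inv_one_sub {z : ℝ} (hz₀ : 0 ≤ z) (hz₁ : z < 1) :
    exp (z + z ^ 2 / 2) ≤ (1 - z)⁻¹ := by
  have hlog : z + z ^ 2 / 2 ≤ -log (1 - z) := by
    have := sum_le_hasSum (range 2) (fun i _ => by positivity)
      (hasSum_pow_div_log_of_abs_lt_one (by rwa [abs_of_nonneg hz₀]))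
    norm_num [sum_range_succ] at this
    linarith
  calc exp (z + z ^ 2 / 2) ≤ exp (-log (1 - z)) := exp_le_exp.2 hlog
    _ = (1 - z)⁻¹ := by rw [exp_neg, exp_log (by linarith)]

end Real

theorem exp_neg_inv_add_one_le_one_sub_inv_sq_pow {n : ℕ} (hn : 1 < n) :
    Real.exp (-(1 / ((n : ℝ) + 1))) ≤ (1 - 1 / (n : ℝ) ^ 2) ^ (n - 1) := by
  have hn' : (1 : ℝ) < n := by exact_mod_cast hn
  have hn₂ : (n : ℝ) ^ 2 - 1 ≠ 0 := by nlinarith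
  have hcast : ((n - 1 : ℕ) : ℝ) = n - 1 := by rw [Nat.cast_sub hn.le, Nat.cast_one]
  have hy : 1 / (n : ℝ) ^ 2 < 1 := by rw [div_lt_one (by positivity)]; nlinarith
  calc Real.exp (-(1 / ((n : ℝ) + 1)))
      = Real.exp (-(1 / (n : ℝ) ^ 2 / (1 - 1 / (n : ℝ) ^ 2))) ^ (n - 1) := by
        rw [← Real.exp_nat_mul, hcast]
        congr 1
        field_simp
        ring
    _ ≤ (1 - 1 / (n : ℝ) ^ 2) ^ (n - 1) :=
        pow_le_pow_left₀ (Real.exp_nonneg _) (Real.exp_neg_div_one_sub_le_one_sub hy) _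

theorem exp_inv_two_mul_sq_le_one_sub_inv_sq_pow {n : ℕ} (hn : 1 < n) :
    Real.exp (1 / (2 * ((n : ℝ) + 1) ^ 2)) ≤ (1 - 1 / (n : ℝ) ^ 2) ^ n * (1 + 1 / ((n : ℝ) - 1)) := by
  have hn' : (1 : ℝ) < n := by exact_mod_cast hn
  have hn₀ : (n : ℝ) ≠ 0 := by positivity
  have hn₁ : (n : ℝ) - 1 ≠ 0 := by linarith
  have ha : 0 ≤ 1 - 1 / (n : ℝ) ^ 2 := sub_nonneg.2 ((div_le_one (by positivity)).2 (by nlinarith))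
  have hz : Real.exp (1 / ((n : ℝ) + 1) + (1 / ((n : ℝ) + 1)) ^ 2 / 2) ≤ 1 + 1 / (n : ℝ) := by
    convert Real.exp_add_sq_div_two_le_inv_one_sub (z := 1 / ((n : ℝ) + 1)) (by positivity)
      (by rw [div_lt_one (by positivity)]; linarith) using 1
    rw [one_sub_div (by positivity), add_sub_cancel_right, inv_div, add_div, div_self hn₀]
  calc Real.exp (1 / (2 * ((n : ℝ) + 1) ^ 2))
      = Real.exp (-(1 / ((n : ℝ) + 1)))
          * Real.exp (1 / ((n : ℝ) + 1) + (1 / ((n : ℝ) + 1)) ^ 2 / 2) := by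
        rw [← Real.exp_add]
        congr 1
        field_simp
        ring
    _ ≤ (1 - 1 / (n : ℝ) ^ 2) ^ (n - 1) * (1 + 1 / (n : ℝ)) :=
        mul_le_mul (exp_neg_inv_add_one_le_one_sub_inv_sq_pow hn) hz (Real.exp_nonneg _)
          (pow_nonneg ha _)
    _ = (1 - 1 / (n : ℝ) ^ 2) ^ n * (1 + 1 / ((n : ℝ) - 1)) := by
        rw [← pow_sub_mul_pow _ hn.le, pow_one, mul_assoc]
        congr 1
        field_simp
        ring

theorem exp_inv_two_mul_sq_le_one_sub_inv_sq_pow_mul_prod {ι : Type*} [Fintype ι] {n : ℕ}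
    (hn : 1 < n) {x : ι → ℝ} (hx : ∀ i, 0 ≤ x i)
    (hsum : 1 / ((n : ℝ) - 1) ≤ ∑ i, x i) :
    Real.exp (1 / (2 * ((n : ℝ) + 1) ^ 2)) ≤ (1 - 1 / (n : ℝ) ^ 2) ^ n * ∏ i, (1 + x i) := by
  have ha : 0 ≤ (1 - 1 / (n : ℝ) ^ 2) ^ n := by
    have hn' : (1 : ℝ) < n := by exact_mod_cast hn
    exact pow_nonneg (sub_nonneg.2 ((div_le_one (by positivity)).2 (by nlinarith))) n
  calc Real.exp (1 / (2 * ((n : ℝ) + 1) ^ 2))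
      ≤ (1 - 1 / (n : ℝ) ^ 2) ^ n * (1 + 1 / ((n : ℝ) - 1)) :=
        exp_inv_two_mul_sq_le_one_sub_inv_sq_pow hn
    _ ≤ (1 - 1 / (n : ℝ) ^ 2) ^ n * ∏ i, (1 + x i) := by
        gcongr
        exact (add_le_add_right hsum 1).trans (one_add_sum_le_prod_one_add univ fun i _ => hx i)

theorem one_div_sub_one_le_sum_div_sq_sub_one_mul {ι : Type*} [Fintype ι] {n : ℕ} (hn : 1 < n)
    {s h : ι → ℝ} (hcov : 1 + 1 / (n : ℝ) ≤ ∑ i, h i / ((n : ℝ) * s i)) :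
    1 / ((n : ℝ) - 1) ≤ ∑ i, h i / (((n : ℝ) ^ 2 - 1) * s i) := by
  have hn' : (1 : ℝ) < n := by exact_mod_cast hn
  have hn₀ : (n : ℝ) ≠ 0 := by positivity
  have hn₂ : (0 : ℝ) < (n : ℝ) ^ 2 - 1 := by nlinarith
  have hsum_eq : ∑ i, h i / (((n : ℝ) ^ 2 - 1) * s i)
      = (n : ℝ) / ((n : ℝ) ^ 2 - 1) * ∑ i, h i / ((n : ℝ) * s i) := by
    rw [mul_sum]
    refine sum_congr rfl fun i _ => ?_
    rw [div_mul_div_comm, mul_left_comm _ (n : ℝ), mul_div_mul_left _ _ hn₀]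
  calc 1 / ((n : ℝ) - 1) = (n : ℝ) / ((n : ℝ) ^ 2 - 1) * (1 + 1 / (n : ℝ)) := by
        have : (n : ℝ) - 1 ≠ 0 := by linarith
        field_simp
        ring
    _ ≤ ∑ i, h i / (((n : ℝ) ^ 2 - 1) * s i) := by rw [hsum_eq]; gcongr

/-- Volume decrease in one Yamnitsky–Levin step: if the constraint `h` is not
covered by the centroid of the corner simplex of `s`, i.e.
`⟨h, c(s)⟩ ≥ 1 + 1/n`, then the corner simplex of the convex combination
`(1 - 1/n²)s + (1/n²)h` has volume at most `exp(-1/(2(n+1)²))` times the volume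
of the corner simplex of `s`. -/
theorem yl_volume_decrease {n : ℕ} (hn : 2 ≤ n)
    (s h : Fin n → ℝ) (hs : ∀ i, 0 < s i) (hh : ∀ i, 0 ≤ h i)
    (hcov : 1 + 1 / (n : ℝ) ≤ ∑ i, h i / ((n : ℝ) * s i)) :
    ∏ i, ((1 - 1 / (n : ℝ) ^ 2) * s i + (1 / (n : ℝ) ^ 2) * h i)⁻¹
      ≤ Real.exp (-1 / (2 * ((n : ℝ) + 1) ^ 2)) * ∏ i, (s i)⁻¹ := by
  have hn₂ : (0 : ℝ) < (n : ℝ) ^ 2 - 1 := by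
    have : (2 : ℝ) ≤ n := by exact_mod_cast hn
    nlinarith
  set x : Fin n → ℝ := fun i => h i / (((n : ℝ) ^ 2 - 1) * s i)
  have hfactor : ∀ i, (1 - 1 / (n : ℝ) ^ 2) * s i + (1 / (n : ℝ) ^ 2) * h i
      = (1 - 1 / (n : ℝ) ^ 2) * s i * (1 + x i) := fun i => by
    have := (hs i).ne'
    simp only [x]
    field_simp
  have hvol : Real.exp (1 / (2 * ((n : ℝ) + 1) ^ 2)) * ∏ i, s i
      ≤ ∏ i, ((1 - 1 / (n : ℝ) ^ 2) * s i + (1 / (n : ℝ) ^ 2) * h i) := by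
    simp_rw [hfactor, prod_mul_distrib, prod_const, card_univ, Fintype.card_fin]
    calc Real.exp (1 / (2 * ((n : ℝ) + 1) ^ 2)) * ∏ i, s i
        ≤ (1 - 1 / (n : ℝ) ^ 2) ^ n * (∏ i, (1 + x i)) * ∏ i, s i :=
          mul_le_mul_of_nonneg_right
            (exp_inv_two_mul_sq_le_one_sub_inv_sq_pow_mul_prod hn
              (fun i => div_nonneg (hh i) (mul_pos hn₂ (hs i)).le)
              (one_div_sub_one_le_sum_div_sq_sub_one_mul hn hcov))
            (prod_nonneg fun i _ => (hs i).le)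
      _ = (1 - 1 / (n : ℝ) ^ 2) ^ n * (∏ i, s i) * ∏ i, (1 + x i) := by ring
  calc ∏ i, ((1 - 1 / (n : ℝ) ^ 2) * s i + (1 / (n : ℝ) ^ 2) * h i)⁻¹
      = (∏ i, ((1 - 1 / (n : ℝ) ^ 2) * s i + (1 / (n : ℝ) ^ 2) * h i))⁻¹ := prod_inv_distrib _
    _ ≤ (Real.exp (1 / (2 * ((n : ℝ) + 1) ^ 2)) * ∏ i, s i)⁻¹ :=
        inv_anti₀ (mul_pos (Real.exp_pos _) (prod_pos fun i _ => hs i)) hvol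
    _ = Real.exp (-1 / (2 * ((n : ℝ) + 1) ^ 2)) * ∏ i, (s i)⁻¹ := by
        rw [mul_inv, ← Real.exp_neg, prod_inv_distrib, neg_div]
end

section
/- Let n ≥ 2 and let A be a normalized nonnegative m×n matrix (max_{i∈[m]} A_{ij} = 1 for every column j). Define λ^{(1)} = (1/n) Σ_{j=1}^n e_{ℓ_j} ∈ Δ_m, where for each j, ℓ_j ∈ argmax_{i∈[m]} A_{ij}, and for k ≥ 1 define λ^{(k+1)} = (1 − 1/n²) λ^{(k)} + (1/n²) e_{j^{(k)}}, where j^{(k)} ∈ argmax_{j∈[m]} ⟨A_j, c(A^Tλ^{(k)})⟩. If for every k ∈ {1, …, K} the stopping condition fails, i.e., max_{j∈[m]} ⟨A_j, c(A^Tλ^{(k)})⟩ > 1 + 1/n, then K ≤ 2(n+1)² n log n. In particular, the Yamnitsky–Levin stage finds a k with max_{j∈[m]} ⟨A_j, c(A^Tλ^{(k)})⟩ ≤ 1 + 1/n within 2(n+1)² n log n + 1 iterations. -/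
/-!
Track the potential `Φ(λ) = ∑ⱼ log (Aᵀλ)ⱼ`. Since `A` is normalized and every iterate lies
in `Δₘ`, each `(Aᵀλ)ⱼ ≤ 1`, so `Φ ≤ 0`; the first iterate puts weight `1/n` on a row
attaining the maximum `1` of each column, so `Φ(λ⁽¹⁾) ≥ -n log n`. An update multiplies
`(Aᵀλ)ⱼ` by `1 - 1/n² + xⱼ/n²`, where `xⱼ = A_{j⁽ᵏ⁾ j} / (Aᵀλ)ⱼ`, and the stopping condition
fails exactly when `∑ⱼ xⱼ > n + 1`. By concavity of `log`, the gain `∑ⱼ log (1 - 1/n² + xⱼ/n²)`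
over `{x ≥ 0, ∑ x = S}` is smallest at a vertex, so it is at least
`log (1 + 1/n) + (n - 1) log (1 - 1/n²) ≥ 1/(2(n+1)²)`. Hence at most `2(n+1)² n log n`
iterations can fail the stopping condition.
-/

open Real Finset Matrix

theorem one_sub_one_div_sq_pos {x : ℝ} (hx : 1 < x) : 0 < 1 - 1 / x ^ 2 := by
  rw [sub_pos, div_lt_one (by positivity)]
  nlinarith

theorem Real.neg_le_log_one_sub {u : ℝ} (h0 : 0 ≤ u) (h1 : u < 1) :
    -(u * (2 - u) / (2 * (1 - u))) ≤ log (1 - u) := by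
  have h2 : 2 - u ≠ 0 := by linarith
  -- `log ((1 + v) / (1 - v)) / 2 ≤ v / (1 - v²)` at `v = u / (2 - u)`, where
  -- `(1 + v) / (1 - v) = (1 - u)⁻¹`
  have key := log_div_le_sum_range_add (x := u / (2 - u)) (div_nonneg h0 (by linarith))
    (by rw [div_lt_one (by linarith)]; linarith) 0
  have e1 : (1 + u / (2 - u)) / (1 - u / (2 - u)) = (1 - u)⁻¹ := by
    have hp : 1 + u / (2 - u) = 2 / (2 - u) := by field_simp; ring
    have hm : 1 - u / (2 - u) = 2 * (1 - u) / (2 - u) := by field_simp; ring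
    rw [hp, hm]
    field_simp
  have e2 : (u / (2 - u)) ^ (2 * 0 + 1) / (1 - (u / (2 - u)) ^ 2) =
      u * (2 - u) / (2 * (1 - u)) / 2 := by
    have hm : 1 - (u / (2 - u)) ^ 2 = 4 * (1 - u) / (2 - u) ^ 2 := by field_simp; ring
    rw [hm, pow_one, div_div_div_eq, div_div,
      div_eq_div_iff (mul_ne_zero h2 (by positivity)) (by positivity)]
    ring
  rw [e1, e2, log_inv, sum_range_zero, zero_add] at key
  linarith

theorem Real.one_div_two_mul_add_one_sq_le_log_add_mul_log {x : ℝ} (hx : 1 < x) :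
    1 / (2 * (x + 1) ^ 2) ≤ log (1 + 1 / x) + (x - 1) * log (1 - 1 / x ^ 2) := by
  have hx1 : 0 < x - 1 := by linarith
  have hu : 1 / x ^ 2 < 1 := sub_pos.1 (one_sub_one_div_sq_pos hx)
  have h1 := le_log_one_add_of_nonneg (x := 1 / x) (by positivity)
  have h2 := mul_le_mul_of_nonneg_left (neg_le_log_one_sub (by positivity) hu) hx1.le
  have e : 2 * (1 / x) / (1 / x + 2)
      + (x - 1) * -(1 / x ^ 2 * (2 - 1 / x ^ 2) / (2 * (1 - 1 / x ^ 2))) - 1 / (2 * (x + 1) ^ 2)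
       = (3 * x ^ 2 + 3 * x + 1) / (2 * x ^ 2 * (x + 1) ^ 2 * (2 * x + 1)) := by
    have : x ^ 2 - 1 ≠ 0 := by nlinarith
    field_simp
    ring
  have : 0 ≤ (3 * x ^ 2 + 3 * x + 1) / (2 * x ^ 2 * (x + 1) ^ 2 * (2 * x + 1)) := by positivity
  linarith

theorem ConcaveOn.card_sub_one_mul_add_le_sum {E ι : Type*} [AddCommGroup E] [Module ℝ E]
    {D : Set E} {f : E → ℝ} (hf : ConcaveOn ℝ D f) {a b : E} (ha : a ∈ D) (hb : b ∈ D)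
    {s : Finset ι} {t : ι → ℝ} (ht0 : ∀ i ∈ s, 0 ≤ t i) (ht1 : ∑ i ∈ s, t i = 1) :
    ((#s : ℝ) - 1) * f a + f b ≤ ∑ i ∈ s, f ((1 - t i) • a + t i • b) := by
  have hle : ∀ i ∈ s, t i ≤ 1 := fun i hi => ht1 ▸ single_le_sum ht0 hi
  calc ((#s : ℝ) - 1) * f a + f b = ∑ i ∈ s, ((1 - t i) * f a + t i * f b) := by
        rw [sum_add_distrib, ← sum_mul, ← sum_mul, sum_sub_distrib, ht1, sum_const, nsmul_one,
          one_mul]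
    _ ≤ ∑ i ∈ s, f ((1 - t i) • a + t i • b) := sum_le_sum fun i hi =>
        hf.2 ha hb (sub_nonneg.2 (hle i hi)) (ht0 i hi) (sub_add_cancel 1 (t i))

theorem one_div_two_mul_add_one_sq_le_sum_log {n : ℕ} (hn : 2 ≤ n) {x : Fin n → ℝ}
    (hx : ∀ j, 0 ≤ x j) (hsum : (n : ℝ) + 1 ≤ ∑ j, x j) :
    1 / (2 * ((n : ℝ) + 1) ^ 2) ≤ ∑ j, log (1 - 1 / (n : ℝ) ^ 2 + x j / (n : ℝ) ^ 2) := by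
  have hn1 : (1 : ℝ) < n := by exact_mod_cast hn
  set S := ∑ j, x j
  have hS : 0 < S := by linarith
  have ha := one_sub_one_div_sq_pos hn1
  -- the minimum over the simplex `∑ x = S` of this concave sum sits at a vertex
  have hvertex := strictConcaveOn_log_Ioi.concaveOn.card_sub_one_mul_add_le_sum
    (a := 1 - 1 / (n : ℝ) ^ 2) (b := 1 - 1 / (n : ℝ) ^ 2 + S / (n : ℝ) ^ 2) ha
    (by simp only [Set.mem_Ioi]; positivity) (s := univ) (t := fun j => x j / S)
    (fun j _ => div_nonneg (hx j) hS.le) (by rw [← sum_div, div_self hS.ne'])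
  have hcomb : ∀ j, (1 - x j / S) • (1 - 1 / (n : ℝ) ^ 2) + (x j / S) • (1 - 1 / (n : ℝ) ^ 2
      + S / (n : ℝ) ^ 2) = 1 - 1 / (n : ℝ) ^ 2 + x j / (n : ℝ) ^ 2 := by
    intro j
    have : x j / S * (S / (n : ℝ) ^ 2) = x j / (n : ℝ) ^ 2 := by field_simp
    simp only [smul_eq_mul]
    linear_combination this
  simp only [hcomb, card_univ, Fintype.card_fin] at hvertex
  have hb : log (1 + 1 / (n : ℝ)) ≤ log (1 - 1 / (n : ℝ) ^ 2 + S / (n : ℝ) ^ 2) := by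
    refine log_le_log (by positivity) ?_
    calc 1 + 1 / (n : ℝ) = 1 - 1 / (n : ℝ) ^ 2 + (n + 1) / (n : ℝ) ^ 2 := by
          field_simp; ring
      _ ≤ 1 - 1 / (n : ℝ) ^ 2 + S / (n : ℝ) ^ 2 := by gcongr
  linarith [one_div_two_mul_add_one_sq_le_log_add_mul_log hn1]

theorem sum_log_add_le_sum_log_of_lt {n : ℕ} (hn : 2 ≤ n) {H B : Fin n → ℝ}
    (hH : ∀ j, 0 < H j) (hB : ∀ j, 0 ≤ B j)
    (hcond : 1 + 1 / (n : ℝ) < ∑ j, B j * (1 / ((n : ℝ) * H j))) :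
    ∑ j, log (H j) + 1 / (2 * ((n : ℝ) + 1) ^ 2) ≤
      ∑ j, log ((1 - 1 / (n : ℝ) ^ 2) * H j + 1 / (n : ℝ) ^ 2 * B j) := by
  have hn0 : (0 : ℝ) < n := by positivity
  have hfactor : ∀ j, (1 - 1 / (n : ℝ) ^ 2) * H j + 1 / (n : ℝ) ^ 2 * B j
      = H j * (1 - 1 / (n : ℝ) ^ 2 + B j / H j / (n : ℝ) ^ 2) := by
    intro j
    have := (hH j).ne'
    field_simp
  have hpos : ∀ j, 0 < 1 - 1 / (n : ℝ) ^ 2 + B j / H j / (n : ℝ) ^ 2 := fun j => by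
    have : 0 ≤ B j / H j / (n : ℝ) ^ 2 := div_nonneg (div_nonneg (hB j) (hH j).le) (sq_nonneg _)
    linarith [one_sub_one_div_sq_pos (show (1 : ℝ) < n by exact_mod_cast hn)]
  have hsum : (n : ℝ) + 1 ≤ ∑ j, B j / H j := by
    have : ∑ j, B j * (1 / ((n : ℝ) * H j)) = (∑ j, B j / H j) / n := by
      rw [sum_div]; exact sum_congr rfl fun j _ => by field_simp
    rw [this, lt_div_iff₀ hn0] at hcond
    have : (1 + 1 / (n : ℝ)) * n = n + 1 := by field_simp
    linarith
  simp only [hfactor, fun j => log_mul (hH j).ne' (hpos j).ne', sum_add_distrib]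
  linarith [one_div_two_mul_add_one_sq_le_sum_log hn
    (fun j => div_nonneg (hB j) (hH j).le) hsum]

theorem Convex.mem_of_succ_eq_smul_add_smul {E : Type*} [AddCommGroup E] [Module ℝ E]
    {s : Set E} (hs : Convex ℝ s) {x p : ℕ → E} {c : ℝ} (hc0 : 0 ≤ c) (hc1 : c ≤ 1) (hx1 : x 1 ∈ s)
    (hp : ∀ k, p k ∈ s) (hrec : ∀ k, 1 ≤ k → x (k + 1) = (1 - c) • x k + c • p k) :
    ∀ k, 1 ≤ k → x k ∈ s := by
  intro k hk
  induction k, hk using Nat.le_induction with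
  | base => exact hx1
  | succ k hk ih => exact hrec k hk ▸ hs ih (hp k) (sub_nonneg.2 hc1) hc0 (sub_add_cancel 1 c)

theorem Matrix.transpose_mulVec_le_one {m n : ℕ} {A : Matrix (Fin m) (Fin n) ℝ}
    (hA : ∀ i j, A i j ≤ 1) {x : Fin m → ℝ} (hx : x ∈ stdSimplex ℝ (Fin m)) (j : Fin n) :
    (Aᵀ *ᵥ x) j ≤ 1 := by
  calc (Aᵀ *ᵥ x) j = ∑ i, A i j * x i := rfl
    _ ≤ ∑ i, x i := sum_le_sum fun i _ => mul_le_of_le_one_left (hx.1 i) (hA i j)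
    _ = 1 := hx.2

theorem le_div_of_forall_add_le_succ {Φ : ℕ → ℝ} {δ L : ℝ} {K : ℕ} (hδ : 0 < δ)
    (h1 : -L ≤ Φ 1) (hK : Φ (K + 1) ≤ 0) (hstep : ∀ k, 1 ≤ k → k ≤ K → Φ k + δ ≤ Φ (k + 1)) :
    (K : ℝ) ≤ L / δ := by
  have htel : ∀ K' ≤ K, Φ 1 + K' * δ ≤ Φ (K' + 1) := by
    intro K' hK'
    induction K' with
    | zero => simp
    | succ K' ih =>
      have := hstep (K' + 1) (Nat.le_add_left 1 K') hK'
      push_cast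
      linarith [ih (Nat.le_of_succ_le hK')]
  rw [le_div_iff₀ hδ]
  linarith [htel K le_rfl]

theorem exists_le_add_one_not_of_forall_le {P : ℕ → Prop} {C : ℝ}
    (h : ∀ K : ℕ, (∀ k, 1 ≤ k → k ≤ K → P k) → (K : ℝ) ≤ C) :
    ∃ k : ℕ, 1 ≤ k ∧ (k : ℝ) ≤ C + 1 ∧ ¬ P k := by
  have hC : 0 ≤ C := by exact_mod_cast h 0 fun k hk hk0 => absurd (hk.trans hk0) (by norm_num)
  by_contra! hall
  have := h (⌊C⌋₊ + 1) fun k hk hkC => hall k hk <| by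
    have : (k : ℝ) ≤ ⌊C⌋₊ + 1 := by exact_mod_cast hkC
    linarith [Nat.floor_le hC]
  push_cast at this
  linarith [Nat.lt_floor_add_one C]

theorem Matrix.transpose_mulVec_smul_add_smul_single_apply {m n : ℕ}
    (A : Matrix (Fin m) (Fin n) ℝ) (a b : ℝ) (x : Fin m → ℝ) (i : Fin m) (j : Fin n) :
    (Aᵀ *ᵥ (a • x + b • Pi.single i 1)) j = a * (Aᵀ *ᵥ x) j + b * A i j := by
  simp [mulVec_add, mulVec_smul]

theorem Matrix.one_div_le_transpose_mulVec_sum_single {m n : ℕ}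
    {A : Matrix (Fin m) (Fin n) ℝ} (hA : ∀ i j, 0 ≤ A i j) {l : Fin n → Fin m}
    (hl : ∀ j, A (l j) j = 1) (j : Fin n) :
    1 / (n : ℝ) ≤ (Aᵀ *ᵥ ∑ j', (1 / (n : ℝ)) • Pi.single (l j') 1) j := by
  simp only [mulVec_sum, mulVec_smul, mulVec_single_one, Finset.sum_apply, Pi.smul_apply,
    smul_eq_mul, ← mul_sum]
  calc 1 / (n : ℝ) = 1 / n * A (l j) j := by rw [hl j, mul_one]
    _ ≤ 1 / n * ∑ j', (Aᵀ.col (l j')) j := by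
      gcongr
      exact single_le_sum (f := fun j' => A (l j') j) (fun j' _ => hA _ _) (mem_univ j)

theorem neg_mul_log_le_sum_log {n : ℕ} {h : Fin n → ℝ} (hh : ∀ j, 1 / (n : ℝ) ≤ h j) :
    -(n * log n) ≤ ∑ j, log (h j) := by
  calc -(n * log n) = ∑ _j : Fin n, log (1 / (n : ℝ)) := by simp
    _ ≤ ∑ j, log (h j) := by
      refine sum_le_sum fun j _ => log_le_log ?_ (hh j)
      have := j.pos
      positivity

section Iterates

variable {m n : ℕ} {A : Matrix (Fin m) (Fin n) ℝ} {lam : ℕ → Fin m → ℝ} {jsel : ℕ → Fin m}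

theorem transpose_mulVec_pos_of_succ_eq {c : ℝ} (hA : ∀ i j, 0 ≤ A i j) (hc0 : 0 ≤ c)
    (hc1 : c < 1) (h1 : ∀ j, 0 < (Aᵀ *ᵥ lam 1) j)
    (hrec : ∀ k, 1 ≤ k → lam (k + 1) = (1 - c) • lam k + c • Pi.single (jsel k) 1) :
    ∀ k, 1 ≤ k → ∀ j, 0 < (Aᵀ *ᵥ lam k) j := by
  intro k hk
  induction k, hk using Nat.le_induction with
  | base => exact h1
  | succ k hk ih =>
    intro j
    rw [hrec k hk, transpose_mulVec_smul_add_smul_single_apply]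
    exact add_pos_of_pos_of_nonneg (mul_pos (sub_pos.2 hc1) (ih j)) (mul_nonneg hc0 (hA _ _))

theorem iterations_le_of_not_stopped (hn : 2 ≤ n) (hA0 : ∀ i j, 0 ≤ A i j)
    (hA1 : ∀ i j, A i j ≤ 1) (hsimplex : ∀ k, 1 ≤ k → lam k ∈ stdSimplex ℝ (Fin m))
    (hinit : ∀ j, 1 / (n : ℝ) ≤ (Aᵀ *ᵥ lam 1) j)
    (hrec : ∀ k, 1 ≤ k → lam (k + 1) =
      (1 - 1 / (n : ℝ) ^ 2) • lam k + (1 / (n : ℝ) ^ 2) • Pi.single (jsel k) 1)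
    {K : ℕ} (hK : ∀ k, 1 ≤ k → k ≤ K →
      1 + 1 / (n : ℝ) < ∑ j', A (jsel k) j' * (1 / ((n : ℝ) * (Aᵀ *ᵥ lam k) j'))) :
    (K : ℝ) ≤ 2 * ((n : ℝ) + 1) ^ 2 * n * log n := by
  have hn1 : (1 : ℝ) < n := by exact_mod_cast hn
  have hpos := transpose_mulVec_pos_of_succ_eq hA0 (by positivity)
    (sub_pos.1 (one_sub_one_div_sq_pos hn1))
    (fun j => (by positivity : (0 : ℝ) < 1 / n).trans_le (hinit j)) hrec
  have := le_div_of_forall_add_le_succ (Φ := fun k => ∑ j, log ((Aᵀ *ᵥ lam k) j))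
    (by positivity : (0 : ℝ) < 1 / (2 * ((n : ℝ) + 1) ^ 2)) (neg_mul_log_le_sum_log hinit)
    (sum_nonpos fun j _ => log_nonpos (hpos (K + 1) (by omega) j).le
      (transpose_mulVec_le_one hA1 (hsimplex (K + 1) (by omega)) j))
    fun k hk hkK => by
      simp only [hrec k hk, transpose_mulVec_smul_add_smul_single_apply]
      exact sum_log_add_le_sum_log_of_lt hn (hpos k hk) (hA0 _) (hK k hk hkK)
  rwa [div_div_eq_mul_div, div_one, mul_comm, ← mul_assoc] at this

end Iterates

/-- Iteration bound for a stage of the Yamnitsky–Levin algorithm: if the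
stopping condition fails for all `k ∈ {1, …, K}`, then
`K ≤ 2(n+1)²·n·log n`; in particular the stage finds an iterate satisfying the
stopping condition within `2(n+1)²·n·log n + 1` iterations. -/
theorem yl_stage_iteration_bound {m n : ℕ} (hn : 2 ≤ n)
    (A : Matrix (Fin m) (Fin n) ℝ)
    (hA : ∀ i j, 0 ≤ A i j)
    (hnorm : ∀ j, (∀ i, A i j ≤ 1) ∧ ∃ i, A i j = 1)
    (lsel : Fin n → Fin m) (hlsel : ∀ j i, A i j ≤ A (lsel j) j)
    (lam : ℕ → Fin m → ℝ)
    (hlam1 : lam 1 = fun i => (1 / (n : ℝ)) * ∑ j : Fin n, if lsel j = i then 1 else 0)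
    (jsel : ℕ → Fin m)
    (hjsel : ∀ k j, ∑ j', A j j' * (1 / ((n : ℝ) * A.transpose.mulVec (lam k) j'))
        ≤ ∑ j', A (jsel k) j' * (1 / ((n : ℝ) * A.transpose.mulVec (lam k) j')))
    (hrec : ∀ k, 1 ≤ k → lam (k + 1) = fun i =>
      (1 - 1 / (n : ℝ) ^ 2) * lam k i + (1 / (n : ℝ) ^ 2) * (if jsel k = i then 1 else 0)) :
    (∀ K : ℕ, (∀ k, 1 ≤ k → k ≤ K →
        1 + 1 / (n : ℝ) < ∑ j', A (jsel k) j' *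
          (1 / ((n : ℝ) * A.transpose.mulVec (lam k) j'))) →
      (K : ℝ) ≤ 2 * ((n : ℝ) + 1) ^ 2 * n * Real.log n) ∧
    (∃ k : ℕ, 1 ≤ k ∧ (k : ℝ) ≤ 2 * ((n : ℝ) + 1) ^ 2 * n * Real.log n + 1 ∧
      ∀ j, ∑ j', A j j' * (1 / ((n : ℝ) * A.transpose.mulVec (lam k) j'))
        ≤ 1 + 1 / (n : ℝ)) := by
  have hn1 : (1 : ℝ) < n := by exact_mod_cast hn
  have hrec' : ∀ k, 1 ≤ k → lam (k + 1) =
      (1 - 1 / (n : ℝ) ^ 2) • lam k + (1 / (n : ℝ) ^ 2) • Pi.single (jsel k) 1 := by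
    intro k hk
    ext i
    simp [hrec k hk, Pi.single_comm (jsel k), Pi.single_apply]
  have hlam1' : lam 1 = ∑ j, (1 / (n : ℝ)) • Pi.single (lsel j) 1 := by
    ext i
    simp only [hlam1, Finset.sum_apply, Pi.smul_apply, smul_eq_mul, Pi.single_comm _ (1 : ℝ) i,
      Pi.single_apply, mul_sum]
  have hsimplex : ∀ k, 1 ≤ k → lam k ∈ stdSimplex ℝ (Fin m) :=
    (convex_stdSimplex ℝ (Fin m)).mem_of_succ_eq_smul_add_smul (by positivity)
      (sub_pos.1 (one_sub_one_div_sq_pos hn1)).le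
      (hlam1' ▸ (convex_stdSimplex ℝ (Fin m)).sum_mem (fun _ _ => by positivity)
        (by rw [sum_const, card_univ, Fintype.card_fin, nsmul_eq_mul,
          mul_one_div_cancel (by positivity)])
        fun j _ => single_mem_stdSimplex ℝ (lsel j))
      (fun k => single_mem_stdSimplex ℝ (jsel k)) hrec'
  have hinit : ∀ j, 1 / (n : ℝ) ≤ (Aᵀ *ᵥ lam 1) j := hlam1' ▸
    one_div_le_transpose_mulVec_sum_single hA fun j =>
      le_antisymm ((hnorm j).1 _) ((hnorm j).2.elim fun i hi => hi ▸ hlsel j i)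
  have hbound := fun K => iterations_le_of_not_stopped (K := K) hn hA (fun i j => (hnorm j).1 i)
    hsimplex hinit hrec'
  obtain ⟨k, hk1, hkC, hstop⟩ := exists_le_add_one_not_of_forall_le hbound
  exact ⟨hbound, k, hk1, hkC, fun j => (hjsel k j).trans (not_lt.1 hstop)⟩
end
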